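/- arXiv:1504.02850 — 2 statements merged into one kernel-verified Lean document; each statement's English description precedes it below -/
import Mathlib

section
/- Let Q be a quadratic stochastic operator and suppose that for some n ≥ 1 and some ε > 0 one has sup_{f,g,h∈𝒟} ‖P_f^{[0,n]}(g) − P_f^{[0,n]}(h)‖₁ < 2 − ε. Then for every j ≥ 1, sup_{f,g,h∈𝒟} ‖P_f^{[0,jn]}(g) − P_f^{[0,jn]}(h)‖₁ ≤ 2(1 − ε/2)^{j−1}; in particular Q is norm quasi-mixing. -/
open MeasureTheory Filter Topology

noncomputable section

/-- The set of densities in `L¹(μ)`. -/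
def Density {X : Type*} [MeasurableSpace X] (μ : Measure X) : Set (Lp ℝ 1 μ) :=
  {f | 0 ≤ f ∧ ‖f‖ = 1}

/-- `Q : L¹ × L¹ → L¹` is a quadratic stochastic operator: bilinear, positivity preserving,
symmetric and `‖Q(f,g)‖₁ = ‖f‖₁ ‖g‖₁` for `f, g ≥ 0`. -/
structure IsQSO {X : Type*} [MeasurableSpace X] (μ : Measure X)
    (Q : Lp ℝ 1 μ → Lp ℝ 1 μ → Lp ℝ 1 μ) : Prop where
  add_left : ∀ f f' g, Q (f + f') g = Q f g + Q f' g
  smul_left : ∀ (c : ℝ) f g, Q (c • f) g = c • Q f g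
  add_right : ∀ f g g', Q f (g + g') = Q f g + Q f g'
  smul_right : ∀ (c : ℝ) f g, Q f (c • g) = c • Q f g
  nonneg : ∀ f g, 0 ≤ f → 0 ≤ g → 0 ≤ Q f g
  symm : ∀ f g, Q f g = Q g f
  norm_mul : ∀ f g, 0 ≤ f → 0 ≤ g → ‖Q f g‖ = ‖f‖ * ‖g‖

/-- The quadratic map `ℚ(f) = Q(f,f)`. -/
def QQ {X : Type*} [MeasurableSpace X] {μ : Measure X}
    (Q : Lp ℝ 1 μ → Lp ℝ 1 μ → Lp ℝ 1 μ) (f : Lp ℝ 1 μ) : Lp ℝ 1 μ := Q f f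

/-- The iterates `ℚⁿ`. -/
def Qiter {X : Type*} [MeasurableSpace X] {μ : Measure X}
    (Q : Lp ℝ 1 μ → Lp ℝ 1 μ → Lp ℝ 1 μ) (n : ℕ) : Lp ℝ 1 μ → Lp ℝ 1 μ := (QQ Q)^[n]

/-- `Pchain Q f n = P_f^{[0,n]}`, the nonhomogeneous Markov chain associated with `Q`
and the density `f`, i.e. `P_f^{[0,0]} = id` and
`P_f^{[0,n+1]}(g) = Q(ℚⁿ(f), P_f^{[0,n]}(g))`. -/
def Pchain {X : Type*} [MeasurableSpace X] {μ : Measure X}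
    (Q : Lp ℝ 1 μ → Lp ℝ 1 μ → Lp ℝ 1 μ) (f : Lp ℝ 1 μ) :
    ℕ → Lp ℝ 1 μ → Lp ℝ 1 μ
  | 0 => id
  | n + 1 => fun g => Q (Qiter Q n f) (Pchain Q f n g)

/-- The metric `d_u(Q₁,Q₂) = sup_{f ∈ 𝒟} ‖ℚ₁(f) - ℚ₂(f)‖₁`. -/
def du {X : Type*} [MeasurableSpace X] (μ : Measure X)
    (Q₁ Q₂ : Lp ℝ 1 μ → Lp ℝ 1 μ → Lp ℝ 1 μ) : ℝ :=
  ⨆ f : Density μ, ‖Q₁ f f - Q₂ f f‖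

/-- The metric `d̂_u(Q₁,Q₂) = sup_{f,g ∈ 𝒟} ‖Q₁(f,g) - Q₂(f,g)‖₁`. -/
def dhat {X : Type*} [MeasurableSpace X] (μ : Measure X)
    (Q₁ Q₂ : Lp ℝ 1 μ → Lp ℝ 1 μ → Lp ℝ 1 μ) : ℝ :=
  ⨆ f : Density μ, ⨆ g : Density μ, ‖Q₁ f g - Q₂ f g‖

/-- `supDiff μ Q n = sup_{f,g,h ∈ 𝒟} ‖P_f^{[0,n]}(g) - P_f^{[0,n]}(h)‖₁`. -/
def supDiff {X : Type*} [MeasurableSpace X] (μ : Measure X)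
    (Q : Lp ℝ 1 μ → Lp ℝ 1 μ → Lp ℝ 1 μ) (n : ℕ) : ℝ :=
  ⨆ f : Density μ, ⨆ g : Density μ, ⨆ h : Density μ,
    ‖Pchain Q f n g - Pchain Q f n h‖

/-- `Q` is norm quasi-mixing. -/
def NormQuasiMixing {X : Type*} [MeasurableSpace X] (μ : Measure X)
    (Q : Lp ℝ 1 μ → Lp ℝ 1 μ → Lp ℝ 1 μ) : Prop :=
  Tendsto (fun n => supDiff μ Q n) atTop (𝓝 0)

/-- `Q` is norm mixing (uniformly asymptotically stable). -/
def NormMixing {X : Type*} [MeasurableSpace X] (μ : Measure X)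
    (Q : Lp ℝ 1 μ → Lp ℝ 1 μ → Lp ℝ 1 μ) : Prop :=
  ∃ f ∈ Density μ,
    Tendsto (fun n => ⨆ g : Density μ, ‖Qiter Q n g - f‖) atTop (𝓝 0)

end


section Aux

open MeasureTheory

variable {X : Type*} [MeasurableSpace X] {μ : Measure X}
  {Q : Lp ℝ 1 μ → Lp ℝ 1 μ → Lp ℝ 1 μ}

private lemma norm_eq_int (f : Lp ℝ 1 μ) (hf : 0 ≤ f) : ‖f‖ = ∫ a, f a ∂μ := by
  rw [L1.norm_eq_integral_norm]
  refine integral_congr_ae ?_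
  filter_upwards [(Lp.coeFn_nonneg f).mpr hf] with a ha
  exact Real.norm_of_nonneg ha

private lemma int_add (f g : Lp ℝ 1 μ) :
    ∫ a, (f + g : Lp ℝ 1 μ) a ∂μ = (∫ a, f a ∂μ) + ∫ a, g a ∂μ := by
  rw [integral_congr_ae (Lp.coeFn_add f g)]
  exact integral_add (L1.integrable_coeFn f) (L1.integrable_coeFn g)

private lemma int_sub (f g : Lp ℝ 1 μ) :
    ∫ a, (f - g : Lp ℝ 1 μ) a ∂μ = (∫ a, f a ∂μ) - ∫ a, g a ∂μ := by
  rw [integral_congr_ae (Lp.coeFn_sub f g)]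
  exact integral_sub (L1.integrable_coeFn f) (L1.integrable_coeFn g)

private lemma norm_add_of_nonneg (f g : Lp ℝ 1 μ) (hf : 0 ≤ f) (hg : 0 ≤ g) :
    ‖f + g‖ = ‖f‖ + ‖g‖ := by
  rw [norm_eq_int _ (add_nonneg hf hg), norm_eq_int f hf, norm_eq_int g hg, int_add]

/-- Decomposition of a difference of densities. -/
private lemma lp_smul_nonneg {c : ℝ} (hc : 0 ≤ c) {v : Lp ℝ 1 μ} (hv : 0 ≤ v) :
    0 ≤ c • v := by
  rw [← Lp.coeFn_nonneg]
  filter_upwards [Lp.coeFn_smul c v, (Lp.coeFn_nonneg v).mpr hv] with a h1 h2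
  rw [Pi.zero_apply, h1, Pi.smul_apply, smul_eq_mul]
  exact mul_nonneg hc h2

private lemma density_decomp {g h : Lp ℝ 1 μ} (hg : g ∈ Density μ) (hh : h ∈ Density μ) :
    g - h = 0 ∨ ∃ G ∈ Density μ, ∃ H ∈ Density μ,
      g - h = (‖g - h‖ / 2) • G - (‖g - h‖ / 2) • H := by
  set u := g - h with hu
  have hdec : u⁺ - u⁻ = u := posPart_sub_negPart u
  have hposn : 0 ≤ u⁺ := posPart_nonneg u
  have hnegn : 0 ≤ u⁻ := negPart_nonneg u
  have hpm : ‖u⁺‖ = ‖u⁻‖ := by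
    have h1 : ‖u⁺‖ - ‖u⁻‖ = ∫ a, u a ∂μ := by
      rw [norm_eq_int _ hposn, norm_eq_int _ hnegn, ← int_sub, hdec]
    have h2 : ∫ a, u a ∂μ = ‖g‖ - ‖h‖ := by
      rw [hu, int_sub, ← norm_eq_int g hg.1, ← norm_eq_int h hh.1]
    rw [hg.2, hh.2, sub_self] at h2
    rw [h2] at h1
    linarith
  have hnu : ‖u‖ = ‖u⁺‖ + ‖u⁻‖ := by
    rw [← norm_abs_eq_norm u, ← posPart_add_negPart u,
      norm_add_of_nonneg _ _ hposn hnegn]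
  by_cases hα : ‖u⁺‖ = 0
  · left
    have : ‖u‖ = 0 := by rw [hnu, hα, ← hpm, hα, add_zero]
    exact norm_eq_zero.mp this
  · right
    have hαpos : 0 < ‖u⁺‖ := lt_of_le_of_ne (norm_nonneg _) (Ne.symm hα)
    refine ⟨(‖u⁺‖)⁻¹ • u⁺, ⟨lp_smul_nonneg (by positivity) hposn, ?_⟩,
      (‖u⁺‖)⁻¹ • u⁻, ⟨lp_smul_nonneg (by positivity) hnegn, ?_⟩, ?_⟩
    · rw [norm_smul, Real.norm_eq_abs, abs_of_nonneg (by positivity)]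
      field_simp
    · rw [norm_smul, Real.norm_eq_abs, abs_of_nonneg (by positivity), ← hpm]
      field_simp
    · have hhalf : ‖u‖ / 2 = ‖u⁺‖ := by rw [hnu, ← hpm]; ring
      rw [hhalf, smul_smul, smul_smul, mul_inv_cancel₀ hα, one_smul, one_smul, hdec]

private lemma Q_sub_right (hQ : IsQSO μ Q) (f g h : Lp ℝ 1 μ) :
    Q f (g - h) = Q f g - Q f h := by
  rw [sub_eq_add_neg, ← neg_one_smul ℝ h, hQ.add_right, hQ.smul_right, neg_one_smul,
    ← sub_eq_add_neg]

private lemma Pchain_sub (hQ : IsQSO μ Q) (f g h : Lp ℝ 1 μ) (k : ℕ) :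
    Pchain Q f k (g - h) = Pchain Q f k g - Pchain Q f k h := by
  induction k with
  | zero => rfl
  | succ k ih => simp only [Pchain, ih, Q_sub_right hQ]

private lemma Pchain_smul (hQ : IsQSO μ Q) (f g : Lp ℝ 1 μ) (c : ℝ) (k : ℕ) :
    Pchain Q f k (c • g) = c • Pchain Q f k g := by
  induction k with
  | zero => rfl
  | succ k ih => simp only [Pchain, ih, hQ.smul_right]

private lemma Q_mem_density (hQ : IsQSO μ Q) {f g : Lp ℝ 1 μ}
    (hf : f ∈ Density μ) (hg : g ∈ Density μ) : Q f g ∈ Density μ :=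
  ⟨hQ.nonneg f g hf.1 hg.1, by rw [hQ.norm_mul f g hf.1 hg.1, hf.2, hg.2, one_mul]⟩

private lemma Qiter_mem (hQ : IsQSO μ Q) {f : Lp ℝ 1 μ} (hf : f ∈ Density μ) (k : ℕ) :
    Qiter Q k f ∈ Density μ := by
  induction k with
  | zero => exact hf
  | succ k ih =>
      rw [Qiter, Function.iterate_succ_apply']
      exact Q_mem_density hQ ih ih

private lemma Pchain_mem (hQ : IsQSO μ Q) {f g : Lp ℝ 1 μ}
    (hf : f ∈ Density μ) (hg : g ∈ Density μ) (k : ℕ) : Pchain Q f k g ∈ Density μ := by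
  induction k with
  | zero => exact hg
  | succ k ih => exact Q_mem_density hQ (Qiter_mem hQ hf k) ih

private lemma diff_norm_le_two (hQ : IsQSO μ Q) {f g h : Lp ℝ 1 μ}
    (hf : f ∈ Density μ) (hg : g ∈ Density μ) (hh : h ∈ Density μ) (k : ℕ) :
    ‖Pchain Q f k g - Pchain Q f k h‖ ≤ 2 := by
  have h1 := (Pchain_mem hQ hf hg k).2
  have h2 := (Pchain_mem hQ hf hh k).2
  calc ‖Pchain Q f k g - Pchain Q f k h‖ ≤ ‖Pchain Q f k g‖ + ‖Pchain Q f k h‖ :=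
        norm_sub_le _ _
    _ = 2 := by rw [h1, h2]; norm_num

private lemma le_supDiff (hQ : IsQSO μ Q) (k : ℕ) {f g h : Lp ℝ 1 μ}
    (hf : f ∈ Density μ) (hg : g ∈ Density μ) (hh : h ∈ Density μ) :
    ‖Pchain Q f k g - Pchain Q f k h‖ ≤ supDiff μ Q k := by
  have bdd1 : ∀ f' g' : Density μ, BddAbove (Set.range fun h' : Density μ =>
      ‖Pchain Q (f' : Lp ℝ 1 μ) k g' - Pchain Q (f' : Lp ℝ 1 μ) k h'‖) := by
    intro f' g'
    refine ⟨2, ?_⟩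
    rintro x ⟨h', rfl⟩
    exact diff_norm_le_two hQ f'.2 g'.2 h'.2 k
  have bdd2 : ∀ f' : Density μ, BddAbove (Set.range fun g' : Density μ =>
      ⨆ h' : Density μ, ‖Pchain Q (f' : Lp ℝ 1 μ) k g' - Pchain Q (f' : Lp ℝ 1 μ) k h'‖) := by
    intro f'
    refine ⟨2, ?_⟩
    rintro x ⟨g', rfl⟩
    exact Real.iSup_le (fun h' => diff_norm_le_two hQ f'.2 g'.2 h'.2 k) (by norm_num)
  have bdd3 : BddAbove (Set.range fun f' : Density μ => ⨆ g' : Density μ,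
      ⨆ h' : Density μ, ‖Pchain Q (f' : Lp ℝ 1 μ) k g' - Pchain Q (f' : Lp ℝ 1 μ) k h'‖) := by
    refine ⟨2, ?_⟩
    rintro x ⟨f', rfl⟩
    exact Real.iSup_le (fun g' => Real.iSup_le
      (fun h' => diff_norm_le_two hQ f'.2 g'.2 h'.2 k) (by norm_num)) (by norm_num)
  calc ‖Pchain Q f k g - Pchain Q f k h‖
      ≤ ⨆ h' : Density μ, ‖Pchain Q f k g - Pchain Q f k h'‖ :=
        le_ciSup (bdd1 ⟨f, hf⟩ ⟨g, hg⟩) (⟨h, hh⟩ : Density μ)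
    _ ≤ ⨆ g' : Density μ, ⨆ h' : Density μ,
          ‖Pchain Q f k (g' : Lp ℝ 1 μ) - Pchain Q f k h'‖ :=
        le_ciSup (bdd2 ⟨f, hf⟩) (⟨g, hg⟩ : Density μ)
    _ ≤ supDiff μ Q k := le_ciSup bdd3 (⟨f, hf⟩ : Density μ)

private lemma supDiff_nonneg (hQ : IsQSO μ Q) (k : ℕ) : 0 ≤ supDiff μ Q k := by
  by_cases hD : Nonempty (Density μ)
  · obtain ⟨f0⟩ := hD
    exact le_trans (norm_nonneg _) (le_supDiff hQ k f0.2 f0.2 f0.2)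
  · rw [not_nonempty_iff] at hD
    unfold supDiff
    rw [Real.iSup_of_isEmpty]

private lemma supDiff_le (hQ : IsQSO μ Q) (k : ℕ) {c : ℝ} (hc : 0 ≤ c)
    (H : ∀ f g h : Lp ℝ 1 μ, f ∈ Density μ → g ∈ Density μ → h ∈ Density μ →
      ‖Pchain Q f k g - Pchain Q f k h‖ ≤ c) : supDiff μ Q k ≤ c :=
  Real.iSup_le (fun f => Real.iSup_le (fun g => Real.iSup_le
    (fun h => H f g h f.2 g.2 h.2) hc) hc) hc

private lemma key_contraction (hQ : IsQSO μ Q) (k : ℕ) {f G H : Lp ℝ 1 μ}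
    (hf : f ∈ Density μ) (hG : G ∈ Density μ) (hH : H ∈ Density μ) :
    ‖Pchain Q f k G - Pchain Q f k H‖ ≤ supDiff μ Q k * (‖G - H‖ / 2) := by
  rcases density_decomp hG hH with h0 | ⟨G', hG', H', hH', hdec⟩
  · have hGH : G = H := sub_eq_zero.mp h0
    rw [hGH, sub_self, norm_zero]
    exact mul_nonneg (supDiff_nonneg hQ k) (by positivity)
  · set α := ‖G - H‖ / 2 with hα
    have hα0 : 0 ≤ α := by positivity
    have heq : Pchain Q f k G - Pchain Q f k H
        = α • (Pchain Q f k G' - Pchain Q f k H') := by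
      rw [← Pchain_sub hQ, hdec, Pchain_sub hQ, Pchain_smul hQ, Pchain_smul hQ, smul_sub]
    rw [heq, norm_smul, Real.norm_eq_abs, abs_of_nonneg hα0, mul_comm]
    exact mul_le_mul_of_nonneg_right (le_supDiff hQ k hf hG' hH') hα0

private lemma Qiter_add (a b : ℕ) (f : Lp ℝ 1 μ) :
    Qiter Q (a + b) f = Qiter Q b (Qiter Q a f) := by
  unfold Qiter
  rw [Nat.add_comm, Function.iterate_add_apply]

private lemma Pchain_add (f g : Lp ℝ 1 μ) (a b : ℕ) :
    Pchain Q f (a + b) g = Pchain Q (Qiter Q a f) b (Pchain Q f a g) := by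
  induction b with
  | zero => rfl
  | succ b ih =>
      rw [← Nat.add_assoc]
      simp only [Pchain, ih, Qiter_add]

private lemma supDiff_add_le (hQ : IsQSO μ Q) (a b : ℕ) :
    supDiff μ Q (a + b) ≤ supDiff μ Q b := by
  refine supDiff_le hQ _ (supDiff_nonneg hQ b) (fun f g h hf hg hh => ?_)
  rw [Pchain_add, Pchain_add]
  exact le_supDiff hQ b (Qiter_mem hQ hf a) (Pchain_mem hQ hf hg a) (Pchain_mem hQ hf hh a)

private lemma supDiff_step (hQ : IsQSO μ Q) (k n : ℕ) :
    supDiff μ Q (k + n) ≤ supDiff μ Q n * (supDiff μ Q k / 2) := by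
  refine supDiff_le hQ _
    (mul_nonneg (supDiff_nonneg hQ n) (div_nonneg (supDiff_nonneg hQ k) two_pos.le)) ?_
  intro f g h hf hg hh
  rw [Pchain_add, Pchain_add]
  calc ‖Pchain Q (Qiter Q k f) n (Pchain Q f k g) - Pchain Q (Qiter Q k f) n (Pchain Q f k h)‖
      ≤ supDiff μ Q n * (‖Pchain Q f k g - Pchain Q f k h‖ / 2) :=
        key_contraction hQ n (Qiter_mem hQ hf k) (Pchain_mem hQ hf hg k) (Pchain_mem hQ hf hh k)
    _ ≤ supDiff μ Q n * (supDiff μ Q k / 2) := by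
        refine mul_le_mul_of_nonneg_left ?_ (supDiff_nonneg hQ n)
        have := le_supDiff hQ k hf hg hh
        linarith

end Aux

/-- If for some `n ≥ 1` and `ε > 0` a QSO `Q` satisfies
`sup_{f,g,h∈𝒟} ‖P_f^{[0,n]}(g) − P_f^{[0,n]}(h)‖₁ < 2 − ε`, then for every `j ≥ 1`
`sup_{f,g,h∈𝒟} ‖P_f^{[0,jn]}(g) − P_f^{[0,jn]}(h)‖₁ ≤ 2(1 − ε/2)^{j−1}`;
in particular `Q` is norm quasi-mixing. -/
theorem supDiff_lt_two_implies_nqm {X : Type*} [MeasurableSpace X]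
    (μ : Measure X) [SigmaFinite μ]
    (Q : Lp ℝ 1 μ → Lp ℝ 1 μ → Lp ℝ 1 μ) (hQ : IsQSO μ Q)
    (n : ℕ) (hn : 1 ≤ n) (ε : ℝ) (hε : 0 < ε)
    (hlt : supDiff μ Q n < 2 - ε) :
    (∀ j : ℕ, 1 ≤ j → supDiff μ Q (j * n) ≤ 2 * (1 - ε / 2) ^ (j - 1)) ∧
    NormQuasiMixing μ Q := by
  have hS0 : ∀ k, 0 ≤ supDiff μ Q k := supDiff_nonneg hQ
  have hε2 : ε < 2 := by have := hS0 n; linarith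
  have hr0 : 0 ≤ 1 - ε / 2 := by linarith
  have hr1 : 1 - ε / 2 < 1 := by linarith
  have main : ∀ j : ℕ, 1 ≤ j → supDiff μ Q (j * n) ≤ 2 * (1 - ε / 2) ^ (j - 1) := by
    intro j hj
    induction j, hj using Nat.le_induction with
    | base =>
        rw [one_mul]
        norm_num
        linarith
    | succ j hj ih =>
        have hj' : j - 1 + 1 = j := Nat.sub_add_cancel hj
        have h1 : (j + 1) * n = j * n + n := Nat.succ_mul j n
        have h2 : (j + 1) - 1 = j := by omega
        rw [h2]
        calc supDiff μ Q ((j + 1) * n) = supDiff μ Q (j * n + n) := by rw [h1]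
          _ ≤ supDiff μ Q n * (supDiff μ Q (j * n) / 2) := supDiff_step hQ (j * n) n
          _ ≤ (2 - ε) * (2 * (1 - ε / 2) ^ (j - 1) / 2) := by
              apply mul_le_mul hlt.le (by linarith) (div_nonneg (hS0 _) two_pos.le)
                (by linarith)
          _ = 2 * (1 - ε / 2) ^ j := by
              conv_rhs => rw [← hj']
              rw [pow_succ]
              ring
  refine ⟨main, ?_⟩
  have hdiv : Tendsto (fun m : ℕ => m / n - 1) atTop atTop := by
    apply tendsto_atTop_atTop.mpr
    intro b
    refine ⟨n * (b + 1), fun m hm => ?_⟩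
    have hb : b + 1 ≤ m / n := (Nat.le_div_iff_mul_le (by omega)).mpr (by rwa [Nat.mul_comm] at hm)
    omega
  have hpow : Tendsto (fun m : ℕ => 2 * (1 - ε / 2) ^ (m / n - 1)) atTop (𝓝 0) := by
    have h := ((tendsto_pow_atTop_nhds_zero_of_lt_one hr0 hr1).comp hdiv).const_mul 2
    simpa using h
  refine squeeze_zero' (Eventually.of_forall fun m => hS0 m) ?_ hpow
  filter_upwards [eventually_ge_atTop n] with m hm
  have hj : 1 ≤ m / n := (Nat.one_le_div_iff (by omega)).mpr hm
  calc supDiff μ Q m = supDiff μ Q (m % n + m / n * n) := by rw [Nat.mod_add_div']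
    _ ≤ supDiff μ Q (m / n * n) := supDiff_add_le hQ _ _
    _ ≤ 2 * (1 - ε / 2) ^ (m / n - 1) := main _ hj
end

section
/- Let Q be a quadratic stochastic operator. The following are equivalent: (1) there exists f ∈ 𝒟 such that lim_{n→∞} sup_{g∈𝒟} ‖ℚⁿ(g) − f‖₁ = 0; (2) there exists f ∈ 𝒟 such that lim_{n→∞} sup_{g,h∈𝒟} ‖P_h^{[0,n]}(g) − f‖₁ = 0; (3) there exists f ∈ 𝒟 such that for every m ≥ 0, lim_{n→∞} sup_{g,h∈𝒟} ‖P_h^{[m,n]}(g) − f‖₁ = 0. -/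
/-!
Since `ℚ(a + w) - ℚ(a) = 2 Q(a, w) + Q(w, w)`, the derivative of `ℚⁿ` at a density `h` is
`2ⁿ P_h^{[0,n]}`. Along the segment `x = h + s (g - h)` the remainder `R_n` of the first-order
expansion obeys `‖R_{n+1}‖ ≤ 2 ‖R_n‖ + ‖ℚⁿx - ℚⁿh‖²`. Up to a time `J` the increments
`ℚⁿx - ℚⁿh` are `O(2ⁿ s)` because `ℚ` is `2`-Lipschitz on densities, and after `J` they are
below `δ` once `ℚ` has mixed up to `δ`. With `s = δ / 2ᴶ` this gives
`‖P_h^{[0,J+k]}(g) - ℚ^{J+k}(h)‖ ≤ 3δ + 2⁻ᵏ`, so uniform mixing of `ℚ` forces uniform mixing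
of the chains. Conversely `P_g^{[0,n]}(g) = ℚⁿ(g)`, and `P_h^{[m,m+k]} = P_{ℚᵐh}^{[0,k]}`
reduces (3) to (2).
-/

open MeasureTheory Filter Topology

/-- `PchainM Q f m k = P_f^{[m, m+k]}`: `P_f^{[m,m]} = id` and
`P_f^{[m,n+1]}(g) = Q(ℚⁿ(f), P_f^{[m,n]}(g))` for `n ≥ m`. -/
def PchainM {X : Type*} [MeasurableSpace X] {μ : Measure X}
    (Q : Lp ℝ 1 μ → Lp ℝ 1 μ → Lp ℝ 1 μ) (f : Lp ℝ 1 μ) (m : ℕ) :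
    ℕ → Lp ℝ 1 μ → Lp ℝ 1 μ
  | 0 => id
  | k + 1 => fun g => Q (Qiter Q (m + k) f) (PchainM Q f m k g)

section UniformLimits

variable {α ι κ : Type*} {l : Filter α}

lemma tendsto_iSup_iff_eventually_le {F : α → ι → ℝ} {C : ℝ} (h0 : ∀ n i, 0 ≤ F n i)
    (hC : ∀ n i, F n i ≤ C) :
    Tendsto (fun n => ⨆ i, F n i) l (𝓝 0) ↔ ∀ ε > 0, ∀ᶠ n in l, ∀ i, F n i ≤ ε := by
  constructor
  · intro hF ε hε
    filter_upwards [hF.eventually (Iic_mem_nhds hε)] with n hn i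
    exact (le_ciSup ⟨C, Set.forall_mem_range.2 (hC n)⟩ i).trans hn
  · intro hF
    refine tendsto_order.2 ⟨fun a ha => .of_forall fun n => ha.trans_le (Real.iSup_nonneg (h0 n)),
      fun a ha => ?_⟩
    filter_upwards [hF (a / 2) (by positivity)] with n hn
    exact (Real.iSup_le hn (by positivity)).trans_lt (by linarith)

lemma tendsto_iSup₂_iff_eventually_le {F : α → ι → κ → ℝ} {C : ℝ} (h0 : ∀ n i j, 0 ≤ F n i j)
    (hC : ∀ n i j, F n i j ≤ C) :
    Tendsto (fun n => ⨆ i, ⨆ j, F n i j) l (𝓝 0) ↔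
      ∀ ε > 0, ∀ᶠ n in l, ∀ i j, F n i j ≤ ε := by
  rw [tendsto_iSup_iff_eventually_le (fun n i => Real.iSup_nonneg (h0 n i))
    (fun n i => Real.iSup_le (fun j => (hC n i j).trans (le_max_left C 0)) (le_max_right C 0))]
  refine forall₂_congr fun ε hε => eventually_congr (.of_forall fun n => forall_congr' fun i => ?_)
  exact ⟨fun h j => (le_ciSup ⟨C, Set.forall_mem_range.2 (hC n i)⟩ j).trans h,
    fun h => Real.iSup_le h hε.le⟩

end UniformLimits

lemma add_le_two_pow_mul_of_le_two_mul_add {a : ℕ → ℝ} {c : ℝ}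
    (h : ∀ k, a (k + 1) ≤ 2 * a k + c) (k : ℕ) : a k + c ≤ 2 ^ k * (a 0 + c) := by
  induction k with
  | zero => simp
  | succ k ih => rw [pow_succ]; linarith [h k]

namespace MeasureTheory

variable {X : Type*} [MeasurableSpace X] {μ : Measure X}

lemma Lp.smul_nonneg {p : ENNReal} {c : ℝ} (hc : 0 ≤ c) {f : Lp ℝ p μ} (hf : 0 ≤ f) :
    0 ≤ c • f := by
  rw [← Lp.coeFn_nonneg] at hf ⊢
  filter_upwards [Lp.coeFn_smul c f, hf] with x hcf hfx
  simpa [hcf] using mul_nonneg hc hfx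

lemma L1.norm_add_of_nonneg {f g : Lp ℝ 1 μ} (hf : 0 ≤ f) (hg : 0 ≤ g) :
    ‖f + g‖ = ‖f‖ + ‖g‖ := by
  rw [L1.norm_eq_integral_norm, L1.norm_eq_integral_norm, L1.norm_eq_integral_norm,
    ← MeasureTheory.integral_add (L1.integrable_coeFn f).norm (L1.integrable_coeFn g).norm]
  refine integral_congr_ae ?_
  filter_upwards [Lp.coeFn_add f g, (Lp.coeFn_nonneg f).2 hf, (Lp.coeFn_nonneg g).2 hg]
    with x hx hfx hgx
  rw [Pi.zero_apply] at hfx hgx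
  rw [hx, Pi.add_apply, Real.norm_of_nonneg hfx, Real.norm_of_nonneg hgx,
    Real.norm_of_nonneg (add_nonneg hfx hgx)]

lemma L1.norm_eq_norm_posPart_add_norm_negPart (f : Lp ℝ 1 μ) : ‖f‖ = ‖f⁺‖ + ‖f⁻‖ := by
  rw [← norm_add_of_nonneg (posPart_nonneg f) (negPart_nonneg f), posPart_add_negPart,
    norm_abs_eq_norm]

lemma L1.norm_map_le_of_forall_nonneg {E : Type*} [SeminormedAddCommGroup E]
    (Φ : Lp ℝ 1 μ →+ E) {C : ℝ} (hΦ : ∀ u, 0 ≤ u → ‖Φ u‖ ≤ C * ‖u‖) (u : Lp ℝ 1 μ) :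
    ‖Φ u‖ ≤ C * ‖u‖ :=
  calc ‖Φ u‖ = ‖Φ u⁺ - Φ u⁻‖ := by rw [← map_sub, posPart_sub_negPart]
    _ ≤ C * ‖u⁺‖ + C * ‖u⁻‖ :=
      (norm_sub_le _ _).trans (add_le_add (hΦ _ (posPart_nonneg u)) (hΦ _ (negPart_nonneg u)))
    _ = C * ‖u‖ := by rw [L1.norm_eq_norm_posPart_add_norm_negPart u, mul_add]

end MeasureTheory

section QSO

variable {X : Type*} [MeasurableSpace X] {μ : Measure X}

lemma convex_density : Convex ℝ (Density μ) := by
  rintro f ⟨hf0, hf1⟩ g ⟨hg0, hg1⟩ a b ha hb hab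
  have haf := Lp.smul_nonneg ha hf0
  have hbg := Lp.smul_nonneg hb hg0
  refine ⟨add_nonneg haf hbg, ?_⟩
  rw [L1.norm_add_of_nonneg haf hbg, norm_smul, norm_smul, hf1, hg1, Real.norm_of_nonneg ha,
    Real.norm_of_nonneg hb, mul_one, mul_one, hab]

lemma norm_sub_le_two_of_mem_density {f g : Lp ℝ 1 μ} (hf : f ∈ Density μ) (hg : g ∈ Density μ) :
    ‖f - g‖ ≤ 2 :=
  (norm_sub_le f g).trans (by rw [hf.2, hg.2]; norm_num)

lemma tendsto_iSup₂_density_iff {F : ℕ → Lp ℝ 1 μ → Lp ℝ 1 μ → Lp ℝ 1 μ} {f : Lp ℝ 1 μ}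
    (hf : f ∈ Density μ) (hF : ∀ n, ∀ g ∈ Density μ, ∀ h ∈ Density μ, F n g h ∈ Density μ) :
    Tendsto (fun n => ⨆ g : Density μ, ⨆ h : Density μ, ‖F n g h - f‖) atTop (𝓝 0) ↔
      ∀ ε > 0, ∀ᶠ n in atTop, ∀ g h : Density μ, ‖F n g h - f‖ ≤ ε :=
  tendsto_iSup₂_iff_eventually_le (fun _ _ _ => norm_nonneg _)
    fun n g h => norm_sub_le_two_of_mem_density (hF n g g.2 h h.2) hf

variable {Q : Lp ℝ 1 μ → Lp ℝ 1 μ → Lp ℝ 1 μ}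

lemma qiter_succ (n : ℕ) (f : Lp ℝ 1 μ) : Qiter Q (n + 1) f = QQ Q (Qiter Q n f) :=
  Function.iterate_succ_apply' _ _ _

lemma pchain_self (h : Lp ℝ 1 μ) (n : ℕ) : Pchain Q h n h = Qiter Q n h := by
  induction n with
  | zero => rfl
  | succ n ih =>
    show Q (Qiter Q n h) (Pchain Q h n h) = _
    rw [ih, qiter_succ, QQ]

lemma pchainM_eq_pchain_qiter (h : Lp ℝ 1 μ) (m : ℕ) :
    PchainM Q h m = Pchain Q (Qiter Q m h) := by
  funext k g
  induction k with
  | zero => rfl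
  | succ k ih =>
    show Q _ (PchainM Q h m k g) = Q _ (Pchain Q (Qiter Q m h) k g)
    rw [ih, add_comm, Qiter, Function.iterate_add_apply]
    rfl

/-- The remainder of the first-order expansion of `ℚⁿ` at `h` in the direction `g - h`, whose
derivative there is `2ⁿ P_h^{[0,n]}`. -/
def linRemainder (Q : Lp ℝ 1 μ → Lp ℝ 1 μ → Lp ℝ 1 μ) (h g : Lp ℝ 1 μ) (s : ℝ) (n : ℕ) :
    Lp ℝ 1 μ :=
  Qiter Q n (h + s • (g - h)) - Qiter Q n h - (2 ^ n * s) • (Pchain Q h n g - Qiter Q n h)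

lemma linRemainder_zero (h g : Lp ℝ 1 μ) (s : ℝ) : linRemainder Q h g s 0 = 0 := by
  simp [linRemainder, Qiter, Pchain]

namespace IsQSO

variable {g h : Lp ℝ 1 μ} {s : ℝ}

lemma sub_left (hQ : IsQSO μ Q) (f f' g : Lp ℝ 1 μ) : Q (f - f') g = Q f g - Q f' g := by
  rw [eq_sub_iff_add_eq, ← hQ.add_left, sub_add_cancel]

lemma sub_right (hQ : IsQSO μ Q) (f g g' : Lp ℝ 1 μ) : Q f (g - g') = Q f g - Q f g' := by
  rw [eq_sub_iff_add_eq, ← hQ.add_right, sub_add_cancel]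

lemma norm_le (hQ : IsQSO μ Q) (f g : Lp ℝ 1 μ) : ‖Q f g‖ ≤ ‖f‖ * ‖g‖ := by
  have hleft : ∀ f g, 0 ≤ g → ‖Q f g‖ ≤ ‖g‖ * ‖f‖ := fun f g hg =>
    L1.norm_map_le_of_forall_nonneg (.mk' (Q · g) fun a b => hQ.add_left a b g) 
      (fun u hu => (hQ.norm_mul u g hu hg).trans_le (mul_comm _ _).le) f
  exact L1.norm_map_le_of_forall_nonneg (.mk' (Q f) (hQ.add_right f))
    (fun u hu => hleft f u hu |>.trans_eq (mul_comm _ _)) g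

lemma mem_density (hQ : IsQSO μ Q) {f g : Lp ℝ 1 μ} (hf : f ∈ Density μ) (hg : g ∈ Density μ) :
    Q f g ∈ Density μ :=
  ⟨hQ.nonneg f g hf.1 hg.1, by rw [hQ.norm_mul f g hf.1 hg.1, hf.2, hg.2, one_mul]⟩

lemma qiter_mem (hQ : IsQSO μ Q) {f : Lp ℝ 1 μ} (hf : f ∈ Density μ) (n : ℕ) :
    Qiter Q n f ∈ Density μ := by
  induction n with
  | zero => exact hf
  | succ n ih => rw [qiter_succ]; exact hQ.mem_density ih ih

lemma pchain_mem (hQ : IsQSO μ Q) {h g : Lp ℝ 1 μ} (hh : h ∈ Density μ) (hg : g ∈ Density μ)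
    (n : ℕ) : Pchain Q h n g ∈ Density μ := by
  induction n with
  | zero => exact hg
  | succ n ih => exact hQ.mem_density (hQ.qiter_mem hh n) ih

lemma QQ_add_sub_QQ (hQ : IsQSO μ Q) (f g : Lp ℝ 1 μ) :
    QQ Q (f + g) - QQ Q f = (2 : ℝ) • Q f g + Q g g := by
  rw [QQ, QQ, hQ.add_left, hQ.add_right, hQ.add_right, hQ.symm g f]
  module

lemma norm_QQ_sub_QQ_le (hQ : IsQSO μ Q) (f g : Lp ℝ 1 μ) :
    ‖QQ Q f - QQ Q g‖ ≤ (‖f‖ + ‖g‖) * ‖f - g‖ := by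
  have hsplit : QQ Q f - QQ Q g = Q (f - g) f + Q g (f - g) := by
    rw [QQ, QQ, hQ.sub_left, hQ.sub_right]; abel
  calc ‖QQ Q f - QQ Q g‖ ≤ ‖f - g‖ * ‖f‖ + ‖g‖ * ‖f - g‖ :=
        hsplit ▸ (norm_add_le _ _).trans (add_le_add (hQ.norm_le _ _) (hQ.norm_le _ _))
    _ = (‖f‖ + ‖g‖) * ‖f - g‖ := by ring

lemma norm_qiter_sub_qiter_le (hQ : IsQSO μ Q) {f g : Lp ℝ 1 μ} (hf : f ∈ Density μ)
    (hg : g ∈ Density μ) (n : ℕ) : ‖Qiter Q n f - Qiter Q n g‖ ≤ 2 ^ n * ‖f - g‖ := by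
  induction n with
  | zero => simp [Qiter]
  | succ n ih =>
    rw [qiter_succ, qiter_succ]
    have hlip := hQ.norm_QQ_sub_QQ_le (Qiter Q n f) (Qiter Q n g)
    rw [(hQ.qiter_mem hf n).2, (hQ.qiter_mem hg n).2] at hlip
    rw [pow_succ]
    linarith

lemma linRemainder_succ (hQ : IsQSO μ Q) (n : ℕ) :
    linRemainder Q h g s (n + 1) =
      (2 : ℝ) • Q (Qiter Q n h) (linRemainder Q h g s n) +
        Q (Qiter Q n (h + s • (g - h)) - Qiter Q n h)
          (Qiter Q n (h + s • (g - h)) - Qiter Q n h) := by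
  set a := Qiter Q n h
  set w := Qiter Q n (h + s • (g - h)) - a
  have hx : Qiter Q (n + 1) (h + s • (g - h)) = QQ Q (a + w) := by
    rw [qiter_succ, add_sub_cancel]
  have hP : Pchain Q h (n + 1) g = Q a (Pchain Q h n g) := rfl
  rw [linRemainder, linRemainder, hx, qiter_succ n h, hQ.QQ_add_sub_QQ, hP, QQ,
    ← hQ.sub_right, hQ.sub_right a w, hQ.smul_right]
  module

lemma norm_linRemainder_succ_le (hQ : IsQSO μ Q) (hh : h ∈ Density μ) (n : ℕ) :
    ‖linRemainder Q h g s (n + 1)‖ ≤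
      2 * ‖linRemainder Q h g s n‖ + ‖Qiter Q n (h + s • (g - h)) - Qiter Q n h‖ ^ 2 := by
  rw [hQ.linRemainder_succ, sq]
  refine (norm_add_le _ _).trans (add_le_add ?_ (hQ.norm_le _ _))
  rw [norm_smul, Real.norm_two]
  have := hQ.norm_le (Qiter Q n h) (linRemainder Q h g s n)
  rw [(hQ.qiter_mem hh n).2, one_mul] at this
  linarith

lemma norm_qiter_add_smul_sub_qiter_le (hQ : IsQSO μ Q) (hg : g ∈ Density μ) (hh : h ∈ Density μ)
    (hs0 : 0 ≤ s) (hs1 : s ≤ 1) (n : ℕ) :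
    ‖Qiter Q n (h + s • (g - h)) - Qiter Q n h‖ ≤ 2 ^ (n + 1) * s := by
  have hx := convex_density.add_smul_sub_mem hh hg ⟨hs0, hs1⟩
  calc _ ≤ 2 ^ n * ‖h + s • (g - h) - h‖ := hQ.norm_qiter_sub_qiter_le hx hh n
    _ = 2 ^ n * (s * ‖g - h‖) := by rw [add_sub_cancel_left, norm_smul, Real.norm_of_nonneg hs0]
    _ ≤ 2 ^ n * (s * 2) := by gcongr; exact norm_sub_le_two_of_mem_density hg hh
    _ = 2 ^ (n + 1) * s := by ring

lemma norm_linRemainder_le (hQ : IsQSO μ Q) (hg : g ∈ Density μ) (hh : h ∈ Density μ)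
    (hs0 : 0 ≤ s) (hs1 : s ≤ 1) (n : ℕ) : ‖linRemainder Q h g s n‖ ≤ 2 * 4 ^ n * s ^ 2 := by
  induction n with
  | zero => simpa [linRemainder_zero] using sq_nonneg s
  | succ n ih =>
    have hw := hQ.norm_qiter_add_smul_sub_qiter_le hg hh hs0 hs1 n
    have hw2 : ‖Qiter Q n (h + s • (g - h)) - Qiter Q n h‖ ^ 2 ≤ (2 ^ (n + 1) * s) ^ 2 := by
      gcongr
    calc _ ≤ 2 * (2 * 4 ^ n * s ^ 2) + (2 ^ (n + 1) * s) ^ 2 := by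
          linarith [hQ.norm_linRemainder_succ_le (g := g) (s := s) hh n]
      _ = 2 * 4 ^ (n + 1) * s ^ 2 := by
          rw [mul_pow, ← pow_mul, mul_comm (n + 1) 2, pow_mul]; norm_num; ring

theorem norm_pchain_sub_qiter_le (hQ : IsQSO μ Q) {δ : ℝ} (hδ0 : 0 < δ) (hδ1 : δ ≤ 1) {J : ℕ}
    (hJ : ∀ n ≥ J, ∀ y ∈ Density μ, ∀ z ∈ Density μ, ‖Qiter Q n y - Qiter Q n z‖ ≤ δ)
    (hg : g ∈ Density μ) (hh : h ∈ Density μ) (k : ℕ) :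
    ‖Pchain Q h (J + k) g - Qiter Q (J + k) h‖ ≤ 3 * δ + 1 / 2 ^ k := by
  set s := δ / 2 ^ J
  have hs0 : 0 ≤ s := by positivity
  have hs1 : s ≤ 1 := (div_le_self hδ0.le (one_le_pow₀ one_le_two)).trans hδ1
  set R := linRemainder Q h g s
  set w := fun n => Qiter Q n (h + s • (g - h)) - Qiter Q n h
  have hw : ∀ n ≥ J, ‖w n‖ ≤ δ := fun n hn =>
    hJ n hn _ (convex_density.add_smul_sub_mem hh hg ⟨hs0, hs1⟩) _ hh
  have hRJ : ‖R J‖ ≤ 2 * δ ^ 2 := by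
    have hsJ : 2 * 4 ^ J * s ^ 2 = 2 * δ ^ 2 := by
      rw [div_pow, ← pow_mul, mul_comm J 2, pow_mul]; field_simp; norm_num
    exact hsJ ▸ hQ.norm_linRemainder_le hg hh hs0 hs1 J
  have hR : ‖R (J + k)‖ + δ ^ 2 ≤ 2 ^ k * (3 * δ ^ 2) := by
    refine (add_le_two_pow_mul_of_le_two_mul_add (a := fun i => ‖R (J + i)‖) (fun i => ?_) k).trans
      (by gcongr; rw [add_zero]; linarith)
    have hwi : ‖w (J + i)‖ ^ 2 ≤ δ ^ 2 := by gcongr; exact hw _ (Nat.le_add_right J i)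
    exact (hQ.norm_linRemainder_succ_le hh (J + i)).trans (add_le_add_right hwi _)
  have hscale : 2 ^ (J + k) * s = 2 ^ k * δ := by
    rw [pow_add, mul_right_comm, mul_div_cancel₀ δ (by positivity), mul_comm]
  have hsplit : (2 ^ k * δ) • (Pchain Q h (J + k) g - Qiter Q (J + k) h) =
      w (J + k) - R (J + k) := by
    simp only [w, R, linRemainder, hscale, sub_sub_cancel]
  have hpos : 0 < 2 ^ k * δ := by positivity
  have hmain : ‖Pchain Q h (J + k) g - Qiter Q (J + k) h‖ * (2 ^ k * δ) ≤
      δ + 2 ^ k * (3 * δ ^ 2) := by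
    rw [mul_comm, ← Real.norm_of_nonneg hpos.le, ← norm_smul, hsplit]
    linarith [norm_sub_le (w (J + k)) (R (J + k)), hw (J + k) (Nat.le_add_right J k), sq_nonneg δ]
  calc _ ≤ (δ + 2 ^ k * (3 * δ ^ 2)) / (2 ^ k * δ) := (le_div_iff₀ hpos).2 hmain
    _ = 3 * δ + 1 / 2 ^ k := by field_simp; ring

theorem eventually_norm_pchain_sub_qiter_le (hQ : IsQSO μ Q)
    (hdiam : ∀ δ > 0, ∀ᶠ n in atTop,
      ∀ y ∈ Density μ, ∀ z ∈ Density μ, ‖Qiter Q n y - Qiter Q n z‖ ≤ δ) :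
    ∀ ε > 0, ∀ᶠ n in atTop,
      ∀ g ∈ Density μ, ∀ h ∈ Density μ, ‖Pchain Q h n g - Qiter Q n h‖ ≤ ε := by
  intro ε hε
  have hδ0 : 0 < min 1 (ε / 6) := by positivity
  obtain ⟨J, hJ⟩ := eventually_atTop.1 (hdiam _ hδ0)
  obtain ⟨K, hK⟩ := exists_pow_lt_of_lt_one (half_pos hε) (by norm_num : (1 / 2 : ℝ) < 1)
  filter_upwards [eventually_ge_atTop (J + K)] with n hn g hg h hh
  obtain ⟨k, rfl⟩ := Nat.exists_eq_add_of_le (le_self_add.trans hn)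
  have hk : (1 : ℝ) / 2 ^ k ≤ (1 / 2) ^ K := by
    rw [← one_div_pow]; exact pow_le_pow_of_le_one (by norm_num) (by norm_num) (by omega)
  linarith [hQ.norm_pchain_sub_qiter_le hδ0 (min_le_left _ _) hJ hg hh k, min_le_right 1 (ε / 6)]

theorem eventually_norm_pchain_sub_le (hQ : IsQSO μ Q) {f : Lp ℝ 1 μ}
    (hmix : ∀ ε > 0, ∀ᶠ n in atTop, ∀ g : Density μ, ‖Qiter Q n g - f‖ ≤ ε) :
    ∀ ε > 0, ∀ᶠ n in atTop, ∀ g h : Density μ, ‖Pchain Q h n g - f‖ ≤ ε := by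
  have hdiam : ∀ δ > 0, ∀ᶠ n in atTop,
      ∀ y ∈ Density μ, ∀ z ∈ Density μ, ‖Qiter Q n y - Qiter Q n z‖ ≤ δ := by
    intro δ hδ
    filter_upwards [hmix (δ / 2) (half_pos hδ)] with n hn y hy z hz
    linarith [norm_sub_le_norm_sub_add_norm_sub (Qiter Q n y) f (Qiter Q n z),
      norm_sub_rev f (Qiter Q n z), hn ⟨y, hy⟩, hn ⟨z, hz⟩]
  intro ε hε
  filter_upwards [hQ.eventually_norm_pchain_sub_qiter_le hdiam (ε / 2) (half_pos hε),
    hmix (ε / 2) (half_pos hε)] with n hPQ hQf g h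
  linarith [norm_sub_le_norm_sub_add_norm_sub (Pchain Q h n g) (Qiter Q n h) f, hPQ g g.2 h h.2,
    hQf h]

end IsQSO

end QSO

theorem normMixing_tfae_general {X : Type*} [MeasurableSpace X]
    (μ : Measure X)
    (Q : Lp ℝ 1 μ → Lp ℝ 1 μ → Lp ℝ 1 μ) (hQ : IsQSO μ Q) :
    ((∃ f ∈ Density μ,
        Tendsto (fun n => ⨆ g : Density μ, ‖Qiter Q n g - f‖) atTop (𝓝 0)) ↔
      (∃ f ∈ Density μ,
        Tendsto (fun n => ⨆ g : Density μ, ⨆ h : Density μ,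
          ‖Pchain Q h n g - f‖) atTop (𝓝 0))) ∧
    ((∃ f ∈ Density μ,
        Tendsto (fun n => ⨆ g : Density μ, ⨆ h : Density μ,
          ‖Pchain Q h n g - f‖) atTop (𝓝 0)) ↔
      (∃ f ∈ Density μ, ∀ m : ℕ,
        Tendsto (fun k => ⨆ g : Density μ, ⨆ h : Density μ,
          ‖PchainM Q h m k g - f‖) atTop (𝓝 0))) := by
  have hS1 (f) (hf : f ∈ Density μ) := tendsto_iSup_iff_eventually_le (l := atTop)
    (fun _ _ => norm_nonneg _)
    fun n (g : Density μ) => norm_sub_le_two_of_mem_density (hQ.qiter_mem g.2 n) hf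
  have hS2 (f) (hf : f ∈ Density μ) := tendsto_iSup₂_density_iff
    (F := fun n g h => Pchain Q h n g) hf fun n g hg h hh => hQ.pchain_mem hh hg n
  have hS3 (f) (hf : f ∈ Density μ) (m : ℕ) := tendsto_iSup₂_density_iff
    (F := fun k g h => PchainM Q h m k g) hf fun k g hg h hh => by
      rw [pchainM_eq_pchain_qiter]; exact hQ.pchain_mem (hQ.qiter_mem hh m) hg k
  refine ⟨⟨?_, ?_⟩, ⟨?_, ?_⟩⟩ <;> rintro ⟨f, hf, hlim⟩ <;> refine ⟨f, hf, ?_⟩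
  · exact (hS2 f hf).2 (hQ.eventually_norm_pchain_sub_le ((hS1 f hf).1 hlim))
  · refine (hS1 f hf).2 fun ε hε => ((hS2 f hf).1 hlim ε hε).mono fun n hn g => ?_
    simpa only [pchain_self] using hn g g
  · refine fun m => (hS3 f hf m).2 fun ε hε => ((hS2 f hf).1 hlim ε hε).mono fun n hn g h => ?_
    simpa only [pchainM_eq_pchain_qiter] using hn g ⟨_, hQ.qiter_mem h.2 m⟩
  · have h0 := (hS3 f hf 0).1 (hlim 0)
    simp only [pchainM_eq_pchain_qiter] at h0
    exact (hS2 f hf).2 h0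

/-- For a quadratic stochastic operator `Q` the following are equivalent:
(1) there is `f ∈ 𝒟` with `sup_{g∈𝒟} ‖ℚⁿ(g) − f‖₁ → 0`;
(2) there is `f ∈ 𝒟` with `sup_{g,h∈𝒟} ‖P_h^{[0,n]}(g) − f‖₁ → 0`;
(3) there is `f ∈ 𝒟` such that for every `m ≥ 0`,
`sup_{g,h∈𝒟} ‖P_h^{[m,n]}(g) − f‖₁ → 0` as `n → ∞` (here `n = m + k`, `k → ∞`). -/
theorem normMixing_tfae {X : Type*} [MeasurableSpace X]
    (μ : Measure X) [SigmaFinite μ]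
    (Q : Lp ℝ 1 μ → Lp ℝ 1 μ → Lp ℝ 1 μ) (hQ : IsQSO μ Q) :
    ((∃ f ∈ Density μ,
        Tendsto (fun n => ⨆ g : Density μ, ‖Qiter Q n g - f‖) atTop (𝓝 0)) ↔
      (∃ f ∈ Density μ,
        Tendsto (fun n => ⨆ g : Density μ, ⨆ h : Density μ,
          ‖Pchain Q h n g - f‖) atTop (𝓝 0))) ∧
    ((∃ f ∈ Density μ,
        Tendsto (fun n => ⨆ g : Density μ, ⨆ h : Density μ,
          ‖Pchain Q h n g - f‖) atTop (𝓝 0)) ↔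
      (∃ f ∈ Density μ, ∀ m : ℕ,
        Tendsto (fun k => ⨆ g : Density μ, ⨆ h : Density μ,
          ‖PchainM Q h m k g - f‖) atTop (𝓝 0))) :=
  normMixing_tfae_general μ Q hQ
end
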